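/- For all convex bodies K, C in R^n, the chain (1+s(K))·r(K,−C) ≤ r(K,−C) + R(K,C) ≤ s(C)·r(K,C) + R(K,C) ≤ (1/2)(1+s(C))·D(K,C) holds. -/

import Mathlib

open Pointwise

/-- A convex body: compact, convex, with nonempty interior. -/
def IsBody {n : ℕ} (K : Set (Fin n → ℝ)) : Prop :=
  Convex ℝ K ∧ IsCompact K ∧ (interior K).Nonempty

/-- Circumradius of `K` w.r.t. `C`: smallest `ρ > 0` with `K` contained in a translate of `ρ • C`. -/
noncomputable def circR {n : ℕ} (K C : Set (Fin n → ℝ)) : ℝ :=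
  sInf {ρ : ℝ | 0 < ρ ∧ ∃ t : Fin n → ℝ, K ⊆ t +ᵥ ρ • C}

/-- Inradius of `K` w.r.t. `C`: largest `ρ ≥ 0` with a translate of `ρ • C` inside `K`. -/
noncomputable def inrad {n : ℕ} (K C : Set (Fin n → ℝ)) : ℝ :=
  sSup {ρ : ℝ | 0 ≤ ρ ∧ ∃ t : Fin n → ℝ, t +ᵥ ρ • C ⊆ K}

/-- Minkowski asymmetry `s(K) = R(-K, K)`. -/
noncomputable def asym {n : ℕ} (K : Set (Fin n → ℝ)) : ℝ := circR (-K) K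

/-- Diameter of `K` w.r.t. `C`: twice the maximal circumradius of a segment with endpoints in `K`. -/
noncomputable def diamC {n : ℕ} (K C : Set (Fin n → ℝ)) : ℝ :=
  sSup {d : ℝ | ∃ x ∈ K, ∃ y ∈ K, d = 2 * circR (segment ℝ x y) C}

/-- `K` is (diametrically) complete w.r.t. `C`. -/
def IsDiamComplete {n : ℕ} (K C : Set (Fin n → ℝ)) : Prop :=
  ∀ K' : Set (Fin n → ℝ), IsBody K' → K ⊂ K' → diamC K C < diamC K' C

/-- `S` is an `n`-simplex: convex hull of `n+1` affinely independent points. -/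
def IsSimplexBody {n : ℕ} (S : Set (Fin n → ℝ)) : Prop :=
  ∃ p : Fin (n + 1) → (Fin n → ℝ), AffineIndependent ℝ p ∧ S = convexHull ℝ (Set.range p)

/-- Support function of `C`. -/
noncomputable def supp {n : ℕ} (C : Set (Fin n → ℝ)) (a : Fin n → ℝ) : ℝ :=
  sSup {r : ℝ | ∃ x ∈ C, r = dotProduct a x}

/-- `A ⊆ₜ B`: `A` is contained in some translate of `B`. -/
def SubsetT {n : ℕ} (A B : Set (Fin n → ℝ)) : Prop := ∃ t : Fin n → ℝ, A ⊆ t +ᵥ B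

/-!
The first two inequalities of the chain only transport containments. An inscribed copy
`t + ρ • (-C) ⊆ K` turns a cover `K ⊆ v + R • C` into `-K ⊆ w + (R / ρ) • K`, so
`s(K) ρ ≤ R(K, C)`; a cover `-C ⊆ u + s • C` turns it into an inscribed copy of `(ρ / s) • C`,
so `r(K, -C) ≤ s(C) r(K, C)`.

For the third, let `z + r • C ⊆ K` and `D = D(K, C)`. Given a direction `a`, let `z + r • c` be
the point of `z + r • C` extreme in direction `-a`. Comparing any `x ∈ K` with it along the
segment they span bounds the support function of `K - z` by that of
`(D/2) • C + (D/2 - r) • (-C)`, so the latter contains `K - z`. Covering `-C` by `u + s • C`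
then gives `R(K, C) ≤ D/2 + s (D/2 - r)`, which is the third inequality after optimising over
`s` and `r`. The same estimate with `x = z + r • c'`, `c'` extreme in direction `a`, gives
`r ≤ D/2` when `n > 0`; this bounds the set whose supremum is the inradius. In dimension `0`
all the quantities are `0` (the inradius by the junk value of an unbounded `sSup`).
-/

open Topology

namespace Real

lemma le_sInf_mul {S : Set ℝ} {x r : ℝ} (hS : S.Nonempty) (hr : 0 ≤ r)
    (h : ∀ s ∈ S, x ≤ s * r) : x ≤ sInf S * r := by
  rcases hr.eq_or_lt with rfl | hr
  · obtain ⟨s, hs⟩ := hS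
    simpa using h s hs
  · rw [← div_le_iff₀ hr]
    exact le_csInf hS fun s hs => (div_le_iff₀ hr).2 (h s hs)

lemma mul_sSup_le {S : Set ℝ} {a y : ℝ} (ha : 0 ≤ a) (hy : 0 ≤ y)
    (h : ∀ r ∈ S, a * r ≤ y) : a * sSup S ≤ y := by
  rcases ha.eq_or_lt with rfl | ha
  · simpa using hy
  · rw [← le_div_iff₀' ha]
    exact Real.sSup_le (fun r hr => (le_div_iff₀' ha).2 (h r hr)) (div_nonneg hy ha.le)

end Real

section

variable {n : ℕ} {K C : Set (Fin n → ℝ)}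

lemma mem_vadd_smul_set {t x : Fin n → ℝ} {ρ : ℝ} :
    x ∈ t +ᵥ ρ • C ↔ ∃ c ∈ C, t + ρ • c = x := by
  simp [Set.mem_vadd_set, Set.mem_smul_set]

lemma exists_subsetT_smul (hK : Bornology.IsBounded K) (hC : (interior C).Nonempty) :
    ∃ ρ : ℝ, 0 < ρ ∧ SubsetT K (ρ • C) := by
  obtain ⟨c, hc⟩ := hC
  have hV : -c +ᵥ C ∈ 𝓝 (0 : Fin n → ℝ) := by
    simpa using vadd_mem_nhds_vadd (-c) (mem_interior_iff_mem_nhds.1 hc)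
  obtain ⟨r, hr⟩ := absorbs_iff_norm.1 ((NormedSpace.isVonNBounded_iff ℝ).2 hK hV)
  refine ⟨max r 1, by positivity, max r 1 • -c, fun x hx => ?_⟩
  obtain ⟨y, ⟨c', hc', rfl⟩, rfl⟩ :=
    hr (max r 1) ((le_max_left r 1).trans (le_abs_self _)) hx
  exact mem_vadd_smul_set.2 ⟨c', hc', by simp [smul_add]⟩

section Circumradius

lemma circR_nonneg (K C : Set (Fin n → ℝ)) : 0 ≤ circR K C :=
  Real.sInf_nonneg fun _ h => h.1.le

lemma circR_le (hC : C.Nonempty) {ρ : ℝ} (hρ : 0 ≤ ρ) (h : SubsetT K (ρ • C)) :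
    circR K C ≤ ρ := by
  have hbdd : BddBelow {ρ : ℝ | 0 < ρ ∧ SubsetT K (ρ • C)} := ⟨0, fun _ h => h.1.le⟩
  rcases hρ.eq_or_lt with rfl | hρ
  · obtain ⟨t, ht⟩ := h
    obtain ⟨c, hc⟩ := hC
    -- `K ⊆ {t}`, and `{t} ⊆ (t - ε • c) +ᵥ ε • C` for every `ε > 0`
    refine le_of_forall_gt_imp_ge_of_dense fun ε hε => csInf_le hbdd ⟨hε, t - ε • c, ?_⟩
    intro x hx
    obtain ⟨c', -, rfl⟩ := mem_vadd_smul_set.1 (ht hx)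
    exact mem_vadd_smul_set.2 ⟨c, hc, by simp⟩
  · exact csInf_le hbdd ⟨hρ, h⟩

lemma le_circR {x : ℝ} (hne : ∃ ρ : ℝ, 0 < ρ ∧ SubsetT K (ρ • C))
    (h : ∀ ρ : ℝ, 0 < ρ → SubsetT K (ρ • C) → x ≤ ρ) : x ≤ circR K C :=
  le_csInf (by obtain ⟨ρ, hρ, ht⟩ := hne; exact ⟨ρ, hρ, ht⟩) fun ρ hρ => h ρ hρ.1 hρ.2

lemma le_circR_mul {x w : ℝ} (hne : ∃ ρ : ℝ, 0 < ρ ∧ SubsetT K (ρ • C)) (hw : 0 ≤ w)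
    (h : ∀ ρ : ℝ, 0 < ρ → SubsetT K (ρ • C) → x ≤ ρ * w) : x ≤ circR K C * w :=
  Real.le_sInf_mul (by obtain ⟨ρ, hρ, ht⟩ := hne; exact ⟨ρ, hρ, ht⟩) hw
    fun ρ hρ => h ρ hρ.1 hρ.2

lemma asym_nonneg (C : Set (Fin n → ℝ)) : 0 ≤ asym C :=
  circR_nonneg (-C) C

end Circumradius

section Inradius

lemma inrad_nonneg (K C : Set (Fin n → ℝ)) : 0 ≤ inrad K C :=
  Real.sSup_nonneg fun _ h => h.1

lemma le_inrad {b : ℝ} (hb : ∀ ρ : ℝ, 0 ≤ ρ → ∀ t : Fin n → ℝ, t +ᵥ ρ • C ⊆ K → ρ ≤ b)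
    {ρ : ℝ} {t : Fin n → ℝ} (hρ : 0 ≤ ρ) (ht : t +ᵥ ρ • C ⊆ K) : ρ ≤ inrad K C :=
  le_csSup ⟨b, fun ρ ⟨hρ, t, ht⟩ => hb ρ hρ t ht⟩ ⟨hρ, t, ht⟩

lemma inrad_le {b : ℝ} (hb : 0 ≤ b)
    (h : ∀ ρ : ℝ, 0 ≤ ρ → ∀ t : Fin n → ℝ, t +ᵥ ρ • C ⊆ K → ρ ≤ b) : inrad K C ≤ b :=
  Real.sSup_le (fun ρ ⟨hρ, t, ht⟩ => h ρ hρ t ht) hb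

lemma mul_inrad_le {a y : ℝ} (ha : 0 ≤ a) (hy : 0 ≤ y)
    (h : ∀ ρ : ℝ, 0 ≤ ρ → ∀ t : Fin n → ℝ, t +ᵥ ρ • C ⊆ K → a * ρ ≤ y) : a * inrad K C ≤ y :=
  Real.mul_sSup_le ha hy fun ρ ⟨hρ, t, ht⟩ => h ρ hρ t ht

end Inradius

section SupportFunction

lemma dotProduct_le_supp (hC : IsCompact C) {x : Fin n → ℝ} (hx : x ∈ C) (a : Fin n → ℝ) :
    a ⬝ᵥ x ≤ supp C a := by
  obtain ⟨b, hb⟩ := hC.bddAbove_image (continuous_const.dotProduct continuous_id).continuousOn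
  refine le_csSup ⟨b, ?_⟩ ⟨x, hx, rfl⟩
  rintro r ⟨y, hy, rfl⟩
  exact hb ⟨y, hy, rfl⟩

lemma exists_dotProduct_eq_supp (hC : IsCompact C) (hne : C.Nonempty) (a : Fin n → ℝ) :
    ∃ c ∈ C, a ⬝ᵥ c = supp C a := by
  obtain ⟨c, hc, hmax⟩ :=
    hC.exists_isMaxOn hne (continuous_const.dotProduct continuous_id).continuousOn
  have h : IsGreatest {r | ∃ x ∈ C, r = a ⬝ᵥ x} (a ⬝ᵥ c) := by
    refine ⟨⟨c, hc, rfl⟩, ?_⟩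
    rintro r ⟨x, hx, rfl⟩
    exact hmax hx
  exact ⟨c, hc, h.csSup_eq.symm⟩

lemma supp_add_supp_neg_nonneg (hC : IsCompact C) (hne : C.Nonempty) (a : Fin n → ℝ) :
    0 ≤ supp C a + supp C (-a) := by
  obtain ⟨c, hc⟩ := hne
  have h := dotProduct_le_supp hC hc (-a)
  rw [neg_dotProduct] at h
  linarith [dotProduct_le_supp hC hc a]

lemma exists_supp_add_supp_neg_pos (hn : 0 < n) (hC : IsCompact C)
    (hCi : (interior C).Nonempty) : ∃ a : Fin n → ℝ, 0 < supp C a + supp C (-a) := by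
  obtain ⟨c, hc⟩ := hCi
  obtain ⟨ε, hε, hball⟩ := Metric.isOpen_iff.1 isOpen_interior c hc
  set e : Fin n → ℝ := Pi.single ⟨0, hn⟩ 1
  have hmem (δ : ℝ) (hδ : |δ| < ε) : c + δ • e ∈ C :=
    interior_subset (hball (by simpa [e, norm_smul, Pi.norm_single] using hδ))
  have hε' : |ε / 2| < ε := by rw [abs_of_pos (by positivity)]; linarith
  have h₁ := dotProduct_le_supp hC (hmem (ε / 2) hε') e
  have h₂ := dotProduct_le_supp hC (hmem (-(ε / 2)) (by rwa [abs_neg])) (-e)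
  have hee : e ⬝ᵥ e = 1 := by simp [e]
  simp only [dotProduct_add, neg_dotProduct, dotProduct_smul, smul_eq_mul, hee] at h₁ h₂
  exact ⟨e, by linarith⟩

lemma exists_eq_dotProduct (f : (Fin n → ℝ) →L[ℝ] ℝ) :
    ∃ a : Fin n → ℝ, ∀ x, f x = a ⬝ᵥ x := by
  refine ⟨fun i => f (Pi.single i 1), fun x => ?_⟩
  conv_lhs => rw [← Finset.univ_sum_single x]
  simp only [map_sum, dotProduct]
  refine Finset.sum_congr rfl fun i _ => ?_
  rw [mul_comm, ← smul_eq_mul, ← map_smul, ← Pi.single_smul, smul_eq_mul, mul_one]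

lemma mem_of_forall_exists_dotProduct_le {A : Set (Fin n → ℝ)} {v : Fin n → ℝ}
    (hA : Convex ℝ A) (hA' : IsClosed A) (h : ∀ a, ∃ b ∈ A, a ⬝ᵥ v ≤ a ⬝ᵥ b) : v ∈ A := by
  by_contra hv
  obtain ⟨f, u, hfA, hfv⟩ := geometric_hahn_banach_closed_point hA hA' hv
  obtain ⟨a, ha⟩ := exists_eq_dotProduct f
  obtain ⟨b, hb, hle⟩ := h a
  have := hfA b hb
  rw [ha] at this hfv
  linarith

end SupportFunction

section Diameter

lemma dotProduct_sub_le_circR_segment_mul (hC : IsCompact C) (hCne : C.Nonempty)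
    {x y : Fin n → ℝ} (hne : ∃ ρ : ℝ, 0 < ρ ∧ SubsetT (segment ℝ x y) (ρ • C))
    (a : Fin n → ℝ) :
    a ⬝ᵥ (x - y) ≤ circR (segment ℝ x y) C * (supp C a + supp C (-a)) := by
  refine le_circR_mul hne (supp_add_supp_neg_nonneg hC hCne a) fun ρ hρ ⟨t, ht⟩ => ?_
  obtain ⟨c, hc, rfl⟩ := mem_vadd_smul_set.1 (ht (left_mem_segment ℝ x y))
  obtain ⟨c', hc', hy⟩ := mem_vadd_smul_set.1 (ht (right_mem_segment ℝ _ y))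
  have h := dotProduct_le_supp hC hc' (-a)
  rw [neg_dotProduct] at h
  have h' := dotProduct_le_supp hC hc a
  rw [← hy, add_sub_add_left_eq_sub, ← smul_sub, dotProduct_smul, smul_eq_mul, dotProduct_sub]
  exact mul_le_mul_of_nonneg_left (by linarith) hρ.le

lemma exists_subsetT_segment (hK : Convex ℝ K) (hKC : ∃ ρ : ℝ, 0 < ρ ∧ SubsetT K (ρ • C))
    {x y : Fin n → ℝ} (hx : x ∈ K) (hy : y ∈ K) :
    ∃ ρ : ℝ, 0 < ρ ∧ SubsetT (segment ℝ x y) (ρ • C) := by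
  obtain ⟨ρ, hρ, t, ht⟩ := hKC
  exact ⟨ρ, hρ, t, (hK.segment_subset hx hy).trans ht⟩

lemma diamC_nonneg (K C : Set (Fin n → ℝ)) : 0 ≤ diamC K C :=
  Real.sSup_nonneg fun _ ⟨_, _, _, _, hd⟩ => hd ▸ mul_nonneg zero_le_two (circR_nonneg _ _)

lemma two_circR_segment_le_diamC (hK : Convex ℝ K)
    (hKC : ∃ ρ : ℝ, 0 < ρ ∧ SubsetT K (ρ • C)) (hCne : C.Nonempty) {x y : Fin n → ℝ}
    (hx : x ∈ K) (hy : y ∈ K) : 2 * circR (segment ℝ x y) C ≤ diamC K C := by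
  obtain ⟨ρ, hρ, hKρ⟩ := hKC
  refine le_csSup ⟨2 * ρ, ?_⟩ ⟨x, hx, y, hy, rfl⟩
  rintro d ⟨x', hx', y', hy', rfl⟩
  obtain ⟨t, ht⟩ := hKρ
  have := circR_le hCne hρ.le ⟨t, (hK.segment_subset hx' hy').trans ht⟩
  linarith

end Diameter

lemma dotProduct_sub_le_of_vadd_smul_subset (hK : Convex ℝ K)
    (hKC : ∃ ρ : ℝ, 0 < ρ ∧ SubsetT K (ρ • C)) (hC : IsCompact C) (hCne : C.Nonempty)
    {z x : Fin n → ℝ} {r : ℝ} (hz : z +ᵥ r • C ⊆ K) (hx : x ∈ K) (a : Fin n → ℝ) :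
    a ⬝ᵥ (x - z) ≤ diamC K C / 2 * supp C a + (diamC K C / 2 - r) * supp C (-a) := by
  obtain ⟨c, hc, hca⟩ := exists_dotProduct_eq_supp hC hCne (-a)
  rw [neg_dotProduct] at hca
  have hy : z + r • c ∈ K := hz (mem_vadd_smul_set.2 ⟨c, hc, rfl⟩)
  have hseg :=
    dotProduct_sub_le_circR_segment_mul hC hCne (exists_subsetT_segment hK hKC hx hy) a
  have hdiam := mul_le_mul_of_nonneg_right
    (show circR (segment ℝ x (z + r • c)) C ≤ diamC K C / 2 by
      linarith [two_circR_segment_le_diamC hK hKC hCne hx hy])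
    (supp_add_supp_neg_nonneg hC hCne a)
  have hsplit : a ⬝ᵥ (x - z) = a ⬝ᵥ (x - (z + r • c)) - r * supp C (-a) := by
    rw [sub_add_eq_sub_sub, dotProduct_sub _ (x - z), dotProduct_smul, smul_eq_mul, ← hca]
    ring
  rw [hsplit]
  linarith

lemma le_half_diamC_of_vadd_smul_subset (hn : 0 < n) (hK : Convex ℝ K)
    (hKC : ∃ ρ : ℝ, 0 < ρ ∧ SubsetT K (ρ • C)) (hC : IsCompact C)
    (hCi : (interior C).Nonempty) {z : Fin n → ℝ} {r : ℝ} (hz : z +ᵥ r • C ⊆ K) :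
    r ≤ diamC K C / 2 := by
  have hCne := hCi.mono interior_subset
  obtain ⟨a, hw⟩ := exists_supp_add_supp_neg_pos hn hC hCi
  obtain ⟨c, hc, hca⟩ := exists_dotProduct_eq_supp hC hCne a
  have h := dotProduct_sub_le_of_vadd_smul_subset hK hKC hC hCne hz
    (hz (mem_vadd_smul_set.2 ⟨c, hc, rfl⟩)) a
  rw [add_sub_cancel_left, dotProduct_smul, smul_eq_mul, hca] at h
  exact le_of_mul_le_mul_right (by linarith) hw

lemma sub_mem_smul_add_smul_neg (hK : Convex ℝ K)
    (hKC : ∃ ρ : ℝ, 0 < ρ ∧ SubsetT K (ρ • C)) (hC : IsCompact C) (hC' : Convex ℝ C)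
    (hCne : C.Nonempty) {z x : Fin n → ℝ} {r : ℝ} (hz : z +ᵥ r • C ⊆ K) (hx : x ∈ K) :
    x - z ∈ (diamC K C / 2) • C + (diamC K C / 2 - r) • -C := by
  refine mem_of_forall_exists_dotProduct_le ((hC'.smul _).add (hC'.neg.smul _))
    ((hC.smul _).add (hC.neg.smul _)).isClosed fun a => ?_
  obtain ⟨c₁, hc₁, h₁⟩ := exists_dotProduct_eq_supp hC hCne a
  obtain ⟨c₂, hc₂, h₂⟩ := exists_dotProduct_eq_supp hC hCne (-a)
  refine ⟨(diamC K C / 2) • c₁ + (diamC K C / 2 - r) • -c₂,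
    Set.add_mem_add (Set.smul_mem_smul_set hc₁) (Set.smul_mem_smul_set (Set.neg_mem_neg.2 hc₂)),
    ?_⟩
  rw [dotProduct_add, dotProduct_smul, dotProduct_smul, smul_eq_mul, smul_eq_mul, h₁,
    dotProduct_neg, ← neg_dotProduct, h₂]
  exact dotProduct_sub_le_of_vadd_smul_subset hK hKC hC hCne hz hx a

lemma circR_le_of_vadd_smul_subset (hK : Convex ℝ K)
    (hKC : ∃ ρ : ℝ, 0 < ρ ∧ SubsetT K (ρ • C)) (hC : IsCompact C) (hC' : Convex ℝ C)
    (hCne : C.Nonempty) {z : Fin n → ℝ} {r s : ℝ} (hz : z +ᵥ r • C ⊆ K)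
    (hr : r ≤ diamC K C / 2) (hs : 0 ≤ s) (hCs : SubsetT (-C) (s • C)) :
    circR K C ≤ diamC K C / 2 + s * (diamC K C / 2 - r) := by
  obtain ⟨u, hu⟩ := hCs
  have hD := diamC_nonneg K C
  have hr' : 0 ≤ s * (diamC K C / 2 - r) := mul_nonneg hs (by linarith)
  refine circR_le hCne (by linarith) ⟨z + (diamC K C / 2 - r) • u, fun x hx => ?_⟩
  obtain ⟨_, ⟨c₁, hc₁, rfl⟩, _, ⟨m, hm, rfl⟩, hxz⟩ :=
    sub_mem_smul_add_smul_neg hK hKC hC hC' hCne hz hx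
  obtain ⟨c₂, hc₂, rfl⟩ := mem_vadd_smul_set.1 (hu hm)
  rw [hC'.add_smul (by linarith) hr']
  refine ⟨_, Set.add_mem_add (Set.smul_mem_smul_set hc₁) (Set.smul_mem_smul_set hc₂), ?_⟩
  beta_reduce at hxz ⊢
  rw [vadd_eq_add, ← sub_add_cancel x z, ← hxz]
  module

lemma circR_sub_half_diamC_le_asym_mul (hn : 0 < n) (hK : Convex ℝ K)
    (hKC : ∃ ρ : ℝ, 0 < ρ ∧ SubsetT K (ρ • C)) (hC : IsCompact C) (hC' : Convex ℝ C)
    (hCi : (interior C).Nonempty) {z : Fin n → ℝ} {r : ℝ} (hz : z +ᵥ r • C ⊆ K) :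
    circR K C - diamC K C / 2 ≤ asym C * (diamC K C / 2 - r) := by
  have hr := le_half_diamC_of_vadd_smul_subset hn hK hKC hC hCi hz
  refine le_circR_mul (exists_subsetT_smul hC.neg.isBounded hCi) (by linarith)
    fun s hs hCs => ?_
  have := circR_le_of_vadd_smul_subset hK hKC hC hC' (hCi.mono interior_subset) hz hr hs.le hCs
  linarith

theorem asym_mul_inrad_neg_le_circR (hKne : K.Nonempty)
    (hKC : ∃ ρ : ℝ, 0 < ρ ∧ SubsetT K (ρ • C)) :
    asym K * inrad K (-C) ≤ circR K C := by
  refine mul_inrad_le (asym_nonneg K) (circR_nonneg K C) fun ρ hρ t ht => ?_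
  rcases hρ.eq_or_lt with rfl | hρ
  · simpa using circR_nonneg K C
  refine le_circR hKC fun R hR ⟨v, hv⟩ => ?_
  rw [← le_div_iff₀ hρ]
  refine circR_le hKne (by positivity) ⟨-v - (R / ρ) • t, fun x hx => ?_⟩
  obtain ⟨c, hc, hcx⟩ := mem_vadd_smul_set.1 (hv (Set.mem_neg.1 hx))
  have hk : t + ρ • -c ∈ K := ht (mem_vadd_smul_set.2 ⟨-c, Set.neg_mem_neg.2 hc, rfl⟩)
  refine mem_vadd_smul_set.2 ⟨t + ρ • -c, hk, ?_⟩
  rw [← neg_neg x, ← hcx, smul_add, smul_smul, div_mul_cancel₀ R hρ.ne']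
  module

theorem inrad_neg_le_asym_mul_inrad (hn : 0 < n) (hK : Convex ℝ K)
    (hKC : ∃ ρ : ℝ, 0 < ρ ∧ SubsetT K (ρ • C)) (hC : IsCompact C)
    (hCi : (interior C).Nonempty) : inrad K (-C) ≤ asym C * inrad K C := by
  have hbdd (ρ : ℝ) (_ : 0 ≤ ρ) (t : Fin n → ℝ) (ht : t +ᵥ ρ • C ⊆ K) : ρ ≤ diamC K C / 2 :=
    le_half_diamC_of_vadd_smul_subset hn hK hKC hC hCi ht
  refine inrad_le (mul_nonneg (asym_nonneg C) (inrad_nonneg K C)) fun ρ hρ t ht => ?_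
  refine le_circR_mul (exists_subsetT_smul hC.neg.isBounded hCi) (inrad_nonneg K C)
    fun s hs ⟨u, hu⟩ => ?_
  rw [← div_le_iff₀' hs]
  refine le_inrad hbdd (div_nonneg hρ hs.le) (t := t + (ρ / s) • u) fun x hx => ?_
  obtain ⟨c, hc, rfl⟩ := mem_vadd_smul_set.1 hx
  obtain ⟨c', hc', hcu⟩ := mem_vadd_smul_set.1 (hu (Set.neg_mem_neg.2 hc))
  refine ht (mem_vadd_smul_set.2 ⟨-c', Set.neg_mem_neg.2 hc', ?_⟩)
  rw [← neg_neg c, ← hcu, smul_neg (ρ / s), smul_add, smul_smul, div_mul_cancel₀ ρ hs.ne']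
  module

theorem asym_mul_inrad_add_circR_le (hn : 0 < n) (hK : Convex ℝ K)
    (hKC : ∃ ρ : ℝ, 0 < ρ ∧ SubsetT K (ρ • C)) (hC : IsCompact C) (hC' : Convex ℝ C)
    (hCi : (interior C).Nonempty) (hKne : K.Nonempty) :
    asym C * inrad K C + circR K C ≤ (1 + asym C) * diamC K C / 2 := by
  have key {z : Fin n → ℝ} {r : ℝ} (hz : z +ᵥ r • C ⊆ K) :=
    circR_sub_half_diamC_le_asym_mul hn hK hKC hC hC' hCi hz
  obtain ⟨k, hk⟩ := hKne
  have h₀ := key (z := k) (r := 0) fun x hx => by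
    obtain ⟨c, -, rfl⟩ := mem_vadd_smul_set.1 hx
    simpa using hk
  have := mul_inrad_le (K := K) (C := C) (asym_nonneg C)
    (y := (1 + asym C) * diamC K C / 2 - circR K C) (by linarith) fun r _ t ht => by
      linarith [key ht]
  linarith

section DimensionZero

variable {K C : Set (Fin 0 → ℝ)}

lemma circR_fin_zero (hC : C.Nonempty) : circR K C = 0 := by
  obtain ⟨c, hc⟩ := hC
  refine (circR_le ⟨c, hc⟩ le_rfl ⟨0, fun x _ => ?_⟩).antisymm (circR_nonneg K C)
  exact mem_vadd_smul_set.2 ⟨c, hc, Subsingleton.elim _ _⟩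

lemma inrad_fin_zero (hK : K.Nonempty) : inrad K C = 0 := by
  obtain ⟨k, hk⟩ := hK
  apply Real.sSup_of_not_bddAbove
  refine not_bddAbove_iff.2 fun b => ⟨|b| + 1, ⟨by positivity, k, fun x _ => ?_⟩, ?_⟩
  · exact Subsingleton.elim x k ▸ hk
  · linarith [le_abs_self b]

lemma diamC_fin_zero (hC : C.Nonempty) : diamC K C = 0 := by
  refine le_antisymm (Real.sSup_nonpos ?_) (diamC_nonneg K C)
  rintro _ ⟨_, _, _, _, rfl⟩
  rw [circR_fin_zero hC, mul_zero]

end DimensionZero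

end

theorem stmt8 {n : ℕ} (K C : Set (Fin n → ℝ)) (hK : IsBody K) (hC : IsBody C) :
    (1 + asym K) * inrad K (-C) ≤ inrad K (-C) + circR K C ∧
    inrad K (-C) + circR K C ≤ asym C * inrad K C + circR K C ∧
    asym C * inrad K C + circR K C ≤ (1 / 2) * (1 + asym C) * diamC K C := by
  obtain ⟨hKconv, hKcomp, hKint⟩ := hK
  obtain ⟨hCconv, hCcomp, hCint⟩ := hC
  have hKne := hKint.mono interior_subset
  have hCne := hCint.mono interior_subset
  rcases Nat.eq_zero_or_pos n with rfl | hn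
  · simp [asym, circR_fin_zero, inrad_fin_zero, diamC_fin_zero, hKne, hCne]
  have hKC := exists_subsetT_smul hKcomp.isBounded hCint
  have h₁ := asym_mul_inrad_neg_le_circR hKne hKC
  have h₂ := inrad_neg_le_asym_mul_inrad hn hKconv hKC hCcomp hCint
  have h₃ := asym_mul_inrad_add_circR_le hn hKconv hKC hCcomp hCconv hCint hKne
  exact ⟨by linarith, by linarith, by linarith⟩
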